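/- For fixed x ∈ ℝ and real ω → ±∞, the solution c satisfies the asymptotic relations c(x,ω) = cos(ωx) + (h + Q(x)/2)·sin(ωx)/ω + o(1/ω) and c'(x,ω) = −ω·sin(ωx) + (h + Q(x)/2)·cos(ωx) + o(1), where Q(x) = ∫₀ˣ q(t) dt and ' denotes the derivative with respect to x. -/

import Mathlib

/-!
Variation of constants turns the equation into the integral equations
`ω c(x) = ω cos ωx + h sin ωx + ∫₀ˣ sin ω(x-t) q(t) c(t) dt` and
`c'(x) = -ω sin ωx + h cos ωx + ∫₀ˣ cos ω(x-t) q(t) c(t) dt`.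
Evaluating the first one at a maximum point of `|c(·, ω)|` on `[0, x]` shows that `c` stays bounded
for large `|ω|`, and then `c(t, ω) = cos ωt + O(1/ω)` uniformly on `[0, x]`. Substituting this into
the integrals, the product formulas `sin ω(x-t) cos ωt = (sin ωx + sin ω(x-2t)) / 2` and
`cos ω(x-t) cos ωt = (cos ωx + cos ω(x-2t)) / 2` produce the term `Q(x)/2` plus oscillatory integrals,
which tend to zero by the Riemann–Lebesgue lemma.
-/

open Complex Filter Topology Asymptotics MeasureTheory

theorem tendsto_intervalIntegral_exp_mul_I_smul {E : Type*} [NormedAddCommGroup E]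
    [NormedSpace ℂ E] (f : ℝ → E) (a b : ℝ) :
    Tendsto (fun w : ℝ => ∫ t in a..b, exp (w * t * I) • f t) (cocompact ℝ) (𝓝 0) := by
  -- the rescaling `w ↦ -w / (2π)` turns the Fourier character `𝐞 (-(t w))` into `exp (w t I)`
  have hscale : Tendsto (fun w : ℝ => w * -(2 * Real.pi)⁻¹) (cocompact ℝ) (cocompact ℝ) :=
    tendsto_cocompact_mul_right₀ (by simp [Real.pi_ne_zero])
  have key := ((Real.tendsto_integral_exp_smul_cocompact
    ((Set.uIoc a b).indicator f)).comp hscale).const_smul (if a ≤ b then (1 : ℝ) else -1)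
  rw [smul_zero] at key
  refine key.congr fun w => ?_
  simp only [Function.comp_apply, intervalIntegral.intervalIntegral_eq_integral_uIoc]
  rw [← integral_indicator measurableSet_uIoc]
  congr 2
  ext t
  by_cases ht : t ∈ Set.uIoc a b
  · simp only [Set.indicator_of_mem ht, Circle.smul_def, Real.fourierChar_apply]
    congr 3
    push_cast
    field_simp
  · simp [Set.indicator_of_notMem ht]

theorem tendsto_intervalIntegral_mul_exp_affine (f : ℝ → ℂ) (a b u v : ℝ) (hv : v ≠ 0) :
    Tendsto (fun w : ℝ => ∫ t in a..b, f t * exp (w * (u - v * t) * I)) (cocompact ℝ) (𝓝 0) := by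
  have key := (tendsto_intervalIntegral_exp_mul_I_smul f a b).comp
    (tendsto_cocompact_mul_right₀ (neg_ne_zero.mpr hv))
  rw [tendsto_zero_iff_norm_tendsto_zero] at key ⊢
  refine key.congr fun w => ?_
  have hsplit : ∀ t : ℝ, f t * exp (w * (u - v * t) * I)
      = exp (↑(w * u) * I) * (exp (↑(w * -v) * t * I) • f t) := by
    intro t
    rw [smul_eq_mul, ← mul_assoc, ← exp_add, mul_comm]
    congr 2
    push_cast
    ring
  simp only [Function.comp_apply, hsplit, intervalIntegral.integral_const_mul, norm_mul,
    norm_exp_ofReal_mul_I, one_mul]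

section Oscillatory

variable {f : ℝ → ℂ} {a b : ℝ}

theorem tendsto_intervalIntegral_mul_sin_affine (hf : IntervalIntegrable f volume a b)
    (u v : ℝ) (hv : v ≠ 0) :
    Tendsto (fun w : ℝ => ∫ t in a..b, f t * sin (w * (u - v * t))) (cocompact ℝ) (𝓝 0) := by
  set F := fun w : ℝ => ∫ t in a..b, f t * exp (w * (u - v * t) * I)
  have hF := tendsto_intervalIntegral_mul_exp_affine f a b u v hv
  have hint : ∀ w : ℝ, IntervalIntegrable (fun t => f t * exp (w * (u - v * t) * I)) volume a b :=
    fun w => hf.mul_continuousOn (by fun_prop)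
  have key : ∀ w : ℝ, ∫ t in a..b, f t * sin (w * (u - v * t)) = (F (w * -1) - F w) * I / 2 := by
    intro w
    simp only [F, ← intervalIntegral.integral_sub (hint _) (hint _),
      ← intervalIntegral.integral_mul_const, ← intervalIntegral.integral_div]
    refine intervalIntegral.integral_congr fun t _ => ?_
    rw [sin, ofReal_mul, ofReal_neg, ofReal_one]
    ring_nf
  have hlim := (((hF.comp (tendsto_cocompact_mul_right₀ (by norm_num : (-1 : ℝ) ≠ 0))).sub
    hF).mul_const I).div_const 2
  rw [sub_self, zero_mul, zero_div] at hlim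
  exact hlim.congr fun w => (key w).symm

theorem tendsto_intervalIntegral_mul_cos_affine (hf : IntervalIntegrable f volume a b)
    (u v : ℝ) (hv : v ≠ 0) :
    Tendsto (fun w : ℝ => ∫ t in a..b, f t * cos (w * (u - v * t))) (cocompact ℝ) (𝓝 0) := by
  set F := fun w : ℝ => ∫ t in a..b, f t * exp (w * (u - v * t) * I)
  have hF := tendsto_intervalIntegral_mul_exp_affine f a b u v hv
  have hint : ∀ w : ℝ, IntervalIntegrable (fun t => f t * exp (w * (u - v * t) * I)) volume a b :=
    fun w => hf.mul_continuousOn (by fun_prop)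
  have key : ∀ w : ℝ, ∫ t in a..b, f t * cos (w * (u - v * t)) = (F w + F (w * -1)) / 2 := by
    intro w
    simp only [F, ← intervalIntegral.integral_add (hint _) (hint _),
      ← intervalIntegral.integral_div]
    refine intervalIntegral.integral_congr fun t _ => ?_
    rw [cos, ofReal_mul, ofReal_neg, ofReal_one]
    ring_nf
  have hlim := (hF.add (hF.comp
    (tendsto_cocompact_mul_right₀ (by norm_num : (-1 : ℝ) ≠ 0)))).div_const 2
  rw [add_zero, zero_div] at hlim
  exact hlim.congr fun w => (key w).symm

end Oscillatory

theorem hasDerivAt_sin_mul_sub (W : ℂ) (y t : ℝ) :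
    HasDerivAt (fun s : ℝ => sin (W * (y - s))) (-(W * cos (W * (y - t)))) t := by
  have := (((hasDerivAt_id (t : ℂ)).const_sub (y : ℂ)).const_mul W).csin
  exact this.comp_ofReal.congr_deriv (by simp [mul_comm])

theorem hasDerivAt_cos_mul_sub (W : ℂ) (y t : ℝ) :
    HasDerivAt (fun s : ℝ => cos (W * (y - s))) (W * sin (W * (y - t))) t := by
  have := (((hasDerivAt_id (t : ℂ)).const_sub (y : ℂ)).const_mul W).ccos
  exact this.comp_ofReal.congr_deriv (by simp [mul_comm])

theorem norm_sin_ofReal_le_one (x : ℝ) : ‖sin (x : ℂ)‖ ≤ 1 := by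
  rw [← ofReal_sin, norm_real]
  exact Real.abs_sin_le_one x

theorem norm_cos_ofReal_le_one (x : ℝ) : ‖cos (x : ℂ)‖ ≤ 1 := by
  rw [← ofReal_cos, norm_real]
  exact Real.abs_cos_le_one x

theorem norm_intervalIntegral_mul_mul_le {k f g : ℝ → ℂ} {x y P M : ℝ} (hy : y ∈ Set.uIcc 0 x)
    (hk : ∀ t ∈ Set.uIcc 0 x, ‖k t‖ ≤ 1) (hf : ∀ t ∈ Set.uIcc 0 x, ‖f t‖ ≤ P)
    (hg : ∀ t ∈ Set.uIcc 0 x, ‖g t‖ ≤ M) :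
    ‖∫ t in 0..y, k t * f t * g t‖ ≤ P * M * |x| := by
  have hP : 0 ≤ P := (norm_nonneg _).trans (hf 0 Set.left_mem_uIcc)
  have hM : 0 ≤ M := (norm_nonneg _).trans (hg 0 Set.left_mem_uIcc)
  have hsub : Set.uIoc 0 y ⊆ Set.uIcc 0 x :=
    Set.uIoc_subset_uIcc.trans (Set.uIcc_subset_uIcc Set.left_mem_uIcc hy)
  calc ‖∫ t in 0..y, k t * f t * g t‖ ≤ 1 * P * M * |y - 0| := by
        refine intervalIntegral.norm_integral_le_of_norm_le_const fun t ht => ?_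
        rw [norm_mul, norm_mul]
        gcongr
        exacts [hk t (hsub ht), hf t (hsub ht), hg t (hsub ht)]
    _ ≤ P * M * |x| := by
        simpa using mul_le_mul_of_nonneg_left (Set.abs_sub_left_of_mem_uIcc hy)
          (mul_nonneg hP hM)

section Kernel

variable {p v : ℝ → ℂ}

theorem integral_sin_mul_sub_mul_mul (hp : Continuous p) (hv : Continuous v) (W : ℂ) (x : ℝ) :
    ∫ t in 0..x, sin (W * (x - t)) * p t * v t
      = (∫ t in 0..x, sin (W * (x - t)) * p t * (v t - cos (W * t)))
        + sin (W * x) * (∫ t in 0..x, p t) / 2 + (∫ t in 0..x, p t * sin (W * (x - 2 * t))) / 2 := by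
  have hsplit : ∀ t : ℝ, sin (W * (x - t)) * p t * v t
      = sin (W * (x - t)) * p t * (v t - cos (W * t))
        + sin (W * x) / 2 * p t + p t * sin (W * (x - 2 * t)) / 2 := by
    intro t
    rw [show W * x = W * (x - t) + W * t by ring, show W * (x - 2 * t) = W * (x - t) - W * t by ring,
      sin_add, sin_sub]
    ring
  simp_rw [hsplit]
  rw [intervalIntegral.integral_add, intervalIntegral.integral_add,
    intervalIntegral.integral_const_mul, intervalIntegral.integral_div]
  · ring
  all_goals exact Continuous.intervalIntegrable (by fun_prop) _ _

theorem integral_cos_mul_sub_mul_mul (hp : Continuous p) (hv : Continuous v) (W : ℂ) (x : ℝ) :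
    ∫ t in 0..x, cos (W * (x - t)) * p t * v t
      = (∫ t in 0..x, cos (W * (x - t)) * p t * (v t - cos (W * t)))
        + cos (W * x) * (∫ t in 0..x, p t) / 2 + (∫ t in 0..x, p t * cos (W * (x - 2 * t))) / 2 := by
  have hsplit : ∀ t : ℝ, cos (W * (x - t)) * p t * v t
      = cos (W * (x - t)) * p t * (v t - cos (W * t))
        + cos (W * x) / 2 * p t + p t * cos (W * (x - 2 * t)) / 2 := by
    intro t
    rw [show W * x = W * (x - t) + W * t by ring, show W * (x - 2 * t) = W * (x - t) - W * t by ring,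
      cos_add, cos_sub]
    ring
  simp_rw [hsplit]
  rw [intervalIntegral.integral_add, intervalIntegral.integral_add,
    intervalIntegral.integral_const_mul, intervalIntegral.integral_div]
  · ring
  all_goals exact Continuous.intervalIntegrable (by fun_prop) _ _

end Kernel

theorem isLittleO_one_div_of_tendsto_mul {F : ℝ → ℂ}
    (hF : Tendsto (fun ω : ℝ => ω * F ω) (cocompact ℝ) (𝓝 0)) :
    F =o[cocompact ℝ] (fun ω => 1 / ω) := by
  have hO : (fun ω : ℝ => (ω : ℂ)⁻¹) =O[cocompact ℝ] (fun ω => 1 / ω) :=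
    isBigO_of_le _ fun ω => by simp
  refine (hO.mul_isLittleO ((isLittleO_one_iff ℝ).mpr hF)).congr' ?_ (by simp)
  filter_upwards [(isCompact_singleton (x := (0 : ℝ))).compl_mem_cocompact] with ω hω
  rw [inv_mul_cancel_left₀ (ofReal_ne_zero.mpr hω)]

/-- `u = c(·, W)` in the paper's notation, with derivative `u'`. -/
structure IsCosineSolution (p : ℝ → ℂ) (h W : ℂ) (u u' : ℝ → ℂ) : Prop where
  hasDerivAt : ∀ t, HasDerivAt u (u' t) t
  hasDerivAt' : ∀ t, HasDerivAt u' ((p t - W ^ 2) * u t) t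
  val_zero : u 0 = 1
  deriv_zero : u' 0 = h

namespace IsCosineSolution

section ComplexFrequency

variable {p : ℝ → ℂ} {h W : ℂ} {u u' : ℝ → ℂ}

theorem continuous (hs : IsCosineSolution p h W u u') : Continuous u :=
  continuous_iff_continuousAt.mpr fun t => (hs.hasDerivAt t).continuousAt

theorem mul_eq_add_integral_sin (hs : IsCosineSolution p h W u u') (hp : Continuous p) (y : ℝ) :
    W * u y = W * cos (W * y) + h * sin (W * y) + ∫ t in 0..y, sin (W * (y - t)) * p t * u t := by
  have hG : ∀ t : ℝ, HasDerivAt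
      (fun s : ℝ => sin (W * (y - s)) * u' s + W * cos (W * (y - s)) * u s)
      (sin (W * (y - t)) * p t * u t) t := fun t =>
    (((hasDerivAt_sin_mul_sub W y t).mul (hs.hasDerivAt' t)).add
      (((hasDerivAt_cos_mul_sub W y t).const_mul W).mul (hs.hasDerivAt t))).congr_deriv (by ring)
  have hint : IntervalIntegrable (fun t => sin (W * (y - t)) * p t * u t) volume 0 y :=
    (by have := hs.continuous; fun_prop : Continuous _).intervalIntegrable _ _
  rw [intervalIntegral.integral_eq_sub_of_hasDerivAt (fun t _ => hG t) hint]
  simp only [sub_self, mul_zero, sin_zero, cos_zero, zero_mul, ofReal_zero, sub_zero, hs.val_zero,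
    hs.deriv_zero]
  ring

theorem deriv_eq_add_integral_cos (hs : IsCosineSolution p h W u u') (hp : Continuous p) (y : ℝ) :
    u' y = -W * sin (W * y) + h * cos (W * y) + ∫ t in 0..y, cos (W * (y - t)) * p t * u t := by
  have hG : ∀ t : ℝ, HasDerivAt
      (fun s : ℝ => cos (W * (y - s)) * u' s - W * sin (W * (y - s)) * u s)
      (cos (W * (y - t)) * p t * u t) t := fun t =>
    (((hasDerivAt_cos_mul_sub W y t).mul (hs.hasDerivAt' t)).sub
      (((hasDerivAt_sin_mul_sub W y t).const_mul W).mul (hs.hasDerivAt t))).congr_deriv (by ring)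
  have hint : IntervalIntegrable (fun t => cos (W * (y - t)) * p t * u t) volume 0 y :=
    (by have := hs.continuous; fun_prop : Continuous _).intervalIntegrable _ _
  rw [intervalIntegral.integral_eq_sub_of_hasDerivAt (fun t _ => hG t) hint]
  simp only [sub_self, mul_zero, sin_zero, cos_zero, zero_mul, ofReal_zero, sub_zero, hs.val_zero,
    hs.deriv_zero]
  ring

end ComplexFrequency

section RealFrequency

variable {p : ℝ → ℂ} {h : ℂ} {ω x P : ℝ} {u u' : ℝ → ℂ}

theorem norm_le_of_mem_uIcc (hs : IsCosineSolution p h ω u u') (hp : Continuous p)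
    (hP : ∀ t ∈ Set.uIcc 0 x, ‖p t‖ ≤ P) (hω : 1 ≤ |ω|) (hωP : 2 * (P * |x|) ≤ |ω|) :
    ∀ t ∈ Set.uIcc 0 x, ‖u t‖ ≤ 2 * (1 + ‖h‖) := by
  obtain ⟨t₀, ht₀, hmax⟩ := isCompact_uIcc.exists_isMaxOn Set.nonempty_uIcc
    hs.continuous.norm.continuousOn
  set M := ‖u t₀‖
  have hint : ‖∫ t in 0..t₀, sin (ω * (t₀ - t)) * p t * u t‖ ≤ P * M * |x| :=
    norm_intervalIntegral_mul_mul_le ht₀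
      (fun t _ => by simpa using norm_sin_ofReal_le_one (ω * (t₀ - t))) hP fun t ht => hmax ht
  have hM : |ω| * M ≤ |ω| + ‖h‖ + P * M * |x| := by
    calc |ω| * M = ‖(ω : ℂ) * u t₀‖ := by rw [norm_mul, norm_real, Real.norm_eq_abs]
      _ ≤ ‖(ω : ℂ) * cos (ω * t₀)‖ + ‖h * sin (ω * t₀)‖
          + ‖∫ t in 0..t₀, sin (ω * (t₀ - t)) * p t * u t‖ := by
        rw [hs.mul_eq_add_integral_sin hp t₀]
        exact norm_add₃_le
      _ ≤ |ω| * 1 + ‖h‖ * 1 + P * M * |x| := by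
        rw [norm_mul, norm_mul, norm_real, Real.norm_eq_abs]
        gcongr
        exacts [by simpa using norm_cos_ofReal_le_one (ω * t₀),
          by simpa using norm_sin_ofReal_le_one (ω * t₀)]
      _ = |ω| + ‖h‖ + P * M * |x| := by ring
  -- `P * M * |x| ≤ |ω| * M / 2`, so the integral term is absorbed by the left-hand side
  have hM2 : M ≤ 2 * (1 + ‖h‖) := by
    nlinarith [mul_le_mul_of_nonneg_right hωP (norm_nonneg (u t₀)),
      mul_le_mul_of_nonneg_left hω (norm_nonneg h)]
  exact fun t ht => (hmax ht).trans hM2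

theorem norm_sub_cos_le (hs : IsCosineSolution p h ω u u') (hp : Continuous p)
    (hP : ∀ t ∈ Set.uIcc 0 x, ‖p t‖ ≤ P) (hω : 1 ≤ |ω|) (hωP : 2 * (P * |x|) ≤ |ω|) :
    ∀ t ∈ Set.uIcc 0 x, ‖u t - cos (ω * t)‖ ≤ (‖h‖ + P * (2 * (1 + ‖h‖)) * |x|) / |ω| := by
  intro t ht
  have hint : ‖∫ s in 0..t, sin (ω * (t - s)) * p s * u s‖ ≤ P * (2 * (1 + ‖h‖)) * |x| :=
    norm_intervalIntegral_mul_mul_le ht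
      (fun s _ => by simpa using norm_sin_ofReal_le_one (ω * (t - s))) hP
      (hs.norm_le_of_mem_uIcc hp hP hω hωP)
  rw [le_div_iff₀ (by linarith)]
  calc ‖u t - cos (ω * t)‖ * |ω|
      = ‖h * sin (ω * t) + ∫ s in 0..t, sin (ω * (t - s)) * p s * u s‖ := by
        rw [← Real.norm_eq_abs, ← norm_real, ← norm_mul, mul_comm, mul_sub,
          hs.mul_eq_add_integral_sin hp t]
        congr 1
        ring
    _ ≤ ‖h‖ + P * (2 * (1 + ‖h‖)) * |x| := by
        refine (norm_add_le _ _).trans (add_le_add ?_ hint)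
        rw [norm_mul]
        exact mul_le_of_le_one_right (norm_nonneg h)
          (by simpa using norm_sin_ofReal_le_one (ω * t))

end RealFrequency

section Family

variable {p : ℝ → ℂ} {h : ℂ} {u u' : ℝ → ℝ → ℂ}

theorem tendsto_integral_mul_sub_cos {k : ℝ → ℝ → ℂ} (hk : ∀ ω t, ‖k ω t‖ ≤ 1)
    (hp : Continuous p) (hs : ∀ ω : ℝ, IsCosineSolution p h ω (u ω) (u' ω)) (x : ℝ) :
    Tendsto (fun ω : ℝ => ∫ t in 0..x, k ω t * p t * (u ω t - cos (ω * t))) (cocompact ℝ)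
      (𝓝 0) := by
  obtain ⟨P, hP⟩ := (isCompact_uIcc (a := 0) (b := x)).exists_bound_of_continuousOn hp.continuousOn
  set C := ‖h‖ + P * (2 * (1 + ‖h‖)) * |x|
  have hbound : ∀ᶠ ω : ℝ in cocompact ℝ,
      ‖∫ t in 0..x, k ω t * p t * (u ω t - cos (ω * t))‖ ≤ P * C * |x| * ‖ω‖⁻¹ := by
    filter_upwards [tendsto_norm_cocompact_atTop.eventually_ge_atTop (max 1 (2 * (P * |x|)))]
      with ω hω
    rw [Real.norm_eq_abs, max_le_iff] at hω
    calc _ ≤ P * (C / |ω|) * |x| := norm_intervalIntegral_mul_mul_le Set.right_mem_uIcc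
          (fun t _ => hk ω t) hP ((hs ω).norm_sub_cos_le hp hP hω.1 hω.2)
      _ = P * C * |x| * ‖ω‖⁻¹ := by rw [Real.norm_eq_abs]; ring
  have hlim := ((tendsto_norm_cocompact_atTop (E := ℝ)).inv_tendsto_atTop).const_mul (P * C * |x|)
  rw [mul_zero] at hlim
  exact squeeze_zero_norm' hbound hlim

theorem isLittleO_sub_cos_sub_sin_div (hp : Continuous p)
    (hs : ∀ ω : ℝ, IsCosineSolution p h ω (u ω) (u' ω)) (x : ℝ) :
    (fun ω : ℝ => u ω x - (cos (ω * x) + (h + (∫ t in 0..x, p t) / 2) * sin (ω * x) / ω))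
      =o[cocompact ℝ] (fun ω => 1 / ω) := by
  refine isLittleO_one_div_of_tendsto_mul ?_
  have hE := tendsto_integral_mul_sub_cos
    (fun ω t => by simpa using norm_sin_ofReal_le_one (ω * (x - t))) hp hs x
  have hR := tendsto_intervalIntegral_mul_sin_affine (hp.intervalIntegrable 0 x) x 2 two_ne_zero
  simp only [ofReal_ofNat] at hR
  have hlim := hE.add (hR.div_const 2)
  rw [zero_div, add_zero] at hlim
  refine hlim.congr' ?_
  filter_upwards [(isCompact_singleton (x := (0 : ℝ))).compl_mem_cocompact] with ω hω
  rw [mul_sub, mul_add, mul_div_cancel₀ _ (ofReal_ne_zero.mpr hω),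
    (hs ω).mul_eq_add_integral_sin hp x, integral_sin_mul_sub_mul_mul hp (hs ω).continuous]
  ring

theorem isLittleO_deriv_add_sin_sub_cos (hp : Continuous p)
    (hs : ∀ ω : ℝ, IsCosineSolution p h ω (u ω) (u' ω)) (x : ℝ) :
    (fun ω : ℝ => u' ω x - (-ω * sin (ω * x) + (h + (∫ t in 0..x, p t) / 2) * cos (ω * x)))
      =o[cocompact ℝ] (fun _ => (1 : ℝ)) := by
  rw [isLittleO_one_iff]
  have hE := tendsto_integral_mul_sub_cos
    (fun ω t => by simpa using norm_cos_ofReal_le_one (ω * (x - t))) hp hs x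
  have hR := tendsto_intervalIntegral_mul_cos_affine (hp.intervalIntegrable 0 x) x 2 two_ne_zero
  simp only [ofReal_ofNat] at hR
  have hlim := hE.add (hR.div_const 2)
  rw [zero_div, add_zero] at hlim
  refine hlim.congr fun ω => ?_
  rw [(hs ω).deriv_eq_add_integral_cos hp x, integral_cos_mul_sub_mul_mul hp (hs ω).continuous]
  ring

end Family

end IsCosineSolution

theorem c_large_omega_asymptotics_general
    (q : ℝ → ℝ) (hq : Continuous q) (h : ℂ)
    (c c' : ℂ → ℝ → ℂ)
    (hc : ∀ ω x, HasDerivAt (c ω) (c' ω x) x)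
    (hc' : ∀ ω x, HasDerivAt (c' ω) (((q x : ℂ) - ω ^ 2) * c ω x) x)
    (hc0 : ∀ ω, c ω 0 = 1) (hc0' : ∀ ω, c' ω 0 = h)
    (Q : ℝ → ℝ) (hQ : ∀ x, Q x = ∫ t in (0 : ℝ)..x, q t) :
    ∀ x : ℝ,
      (fun ω : ℝ => c (ω : ℂ) x -
          (Complex.cos ((ω : ℂ) * x) +
            (h + (Q x : ℂ) / 2) * Complex.sin ((ω : ℂ) * x) / (ω : ℂ)))
        =o[atTop ⊔ atBot] (fun ω : ℝ => 1 / ω) ∧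
      (fun ω : ℝ => c' (ω : ℂ) x -
          (-(ω : ℂ) * Complex.sin ((ω : ℂ) * x) +
            (h + (Q x : ℂ) / 2) * Complex.cos ((ω : ℂ) * x)))
        =o[atTop ⊔ atBot] (fun _ : ℝ => (1 : ℝ)) := by
  intro x
  have hp : Continuous fun t => (q t : ℂ) := continuous_ofReal.comp hq
  have hs : ∀ ω : ℝ, IsCosineSolution (fun t => (q t : ℂ)) h ω (c ω) (c' ω) :=
    fun ω => ⟨hc ω, hc' ω, hc0 ω, hc0' ω⟩
  have hQx : (Q x : ℂ) = ∫ t in (0 : ℝ)..x, (q t : ℂ) := by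
    rw [hQ, intervalIntegral.integral_ofReal]
  rw [sup_comm, ← cocompact_eq_atBot_atTop, hQx]
  exact ⟨IsCosineSolution.isLittleO_sub_cos_sub_sin_div hp hs x,
    IsCosineSolution.isLittleO_deriv_add_sin_sub_cos hp hs x⟩

/-- For fixed `x` and real `ω → ±∞`,
`c(x,ω) = cos(ωx) + (h + Q(x)/2)·sin(ωx)/ω + o(1/ω)` and
`c'(x,ω) = −ω·sin(ωx) + (h + Q(x)/2)·cos(ωx) + o(1)`, where `Q(x) = ∫₀ˣ q(t) dt`. -/
theorem c_large_omega_asymptotics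
    (d : ℝ) (hd : 0 < d) (q : ℝ → ℝ) (hq : Continuous q)
    (hqsupp : ∀ x : ℝ, x ∉ Set.Icc 0 d → q x = 0) (h : ℂ)
    (c c' : ℂ → ℝ → ℂ)
    (hc : ∀ ω x, HasDerivAt (c ω) (c' ω x) x)
    (hc' : ∀ ω x, HasDerivAt (c' ω) (((q x : ℂ) - ω ^ 2) * c ω x) x)
    (hc0 : ∀ ω, c ω 0 = 1) (hc0' : ∀ ω, c' ω 0 = h)
    (Q : ℝ → ℝ) (hQ : ∀ x, Q x = ∫ t in (0 : ℝ)..x, q t) :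
    ∀ x : ℝ,
      (fun ω : ℝ => c (ω : ℂ) x -
          (Complex.cos ((ω : ℂ) * x) +
            (h + (Q x : ℂ) / 2) * Complex.sin ((ω : ℂ) * x) / (ω : ℂ)))
        =o[atTop ⊔ atBot] (fun ω : ℝ => 1 / ω) ∧
      (fun ω : ℝ => c' (ω : ℂ) x -
          (-(ω : ℂ) * Complex.sin ((ω : ℂ) * x) +
            (h + (Q x : ℂ) / 2) * Complex.cos ((ω : ℂ) * x)))
        =o[atTop ⊔ atBot] (fun _ : ℝ => (1 : ℝ)) :=
  c_large_omega_asymptotics_general q hq h c c' hc hc' hc0 hc0' Q hQ
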